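/- Let ω > 0, r₀ = ‖ℓ − x₀‖ > 0, and let ψ₀ ∈ ℝ be such that x₀ − ℓ = r₀(cos ψ₀, sin ψ₀). Then the circular input u_circ(s) = ω r₀ (−sin(ωs + ψ₀), cos(ωs + ψ₀)) is a weakly regularly persistent input trajectory of the bearing-only system at x₀. -/

import Mathlib

open MeasureTheory Metric Set Filter Classical

/-- The plane `ℝ²` with the Euclidean norm. -/
abbrev Pt := EuclideanSpace ℝ (Fin 2)

/-- The vector `(a, b) ∈ ℝ²`. -/
noncomputable def vec2 (a b : ℝ) : Pt := (WithLp.equiv 2 (Fin 2 → ℝ)).symm ![a, b]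

/-- Bearing measurement towards the beacon `ℓ`: `h(z) = (ℓ−z)/‖ℓ−z‖` for `z ≠ ℓ`
(with the convention `h(ℓ) = 0`). -/
noncomputable def bearing (ℓ z : Pt) : Pt := if z = ℓ then 0 else ‖ℓ - z‖⁻¹ • (ℓ - z)

/-- Flow of the single-integrator dynamics `ẋ = u`:
`φ(s;t₁,ξ,u) = ξ + ∫_{t₁}^{s} u(τ)dτ`. -/
noncomputable def flow2 (u : ℝ → Pt) (s t₁ : ℝ) (ξ : Pt) : Pt := ξ + ∫ τ in t₁..s, u τ

/-- Cumulative output error of the bearing-only system. -/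
noncomputable def cumError2 (ℓ : Pt) (u : ℝ → Pt) (t₁ t₂ : ℝ) (ξ₁ ξ₂ : Pt) : ℝ :=
  ∫ s in t₁..t₂, ‖bearing ℓ (flow2 u s t₁ ξ₁) - bearing ℓ (flow2 u s t₁ ξ₂)‖ ^ 2

/-- A `𝒦`-function: continuous, strictly increasing on `[0,∞)`, vanishing at `0`. -/
def IsKFunction (κ : ℝ → ℝ) : Prop :=
  ContinuousOn κ (Set.Ici 0) ∧ StrictMonoOn κ (Set.Ici 0) ∧ κ 0 = 0

/-- Weakly persistent input trajectory at `x₀` for the bearing-only system. -/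
def WeaklyPersistentAt2 (ℓ : Pt) (u : ℝ → Pt) (x₀ : Pt) : Prop :=
  ∃ T > (0 : ℝ), ∀ t ≥ T, ∃ R > (0 : ℝ), ∃ κ : ℝ → ℝ, IsKFunction κ ∧
    ∀ ξ₁ ∈ Metric.closedBall (flow2 u (t - T) 0 x₀) R,
      ∀ ξ₂ ∈ Metric.closedBall (flow2 u (t - T) 0 x₀) R,
        κ ‖ξ₁ - ξ₂‖ ≤ cumError2 ℓ u (t - T) t ξ₁ ξ₂

/-- Weakly regularly persistent input trajectory at `x₀` for the bearing-only
system. -/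
def WeaklyRegularlyPersistentAt2 (ℓ : Pt) (u : ℝ → Pt) (x₀ : Pt) : Prop :=
  ∃ T > (0 : ℝ), ∃ R > (0 : ℝ), ∃ κ : ℝ → ℝ, IsKFunction κ ∧
    ∀ t ≥ T, ∀ ξ₁ ∈ Metric.closedBall (flow2 u (t - T) 0 x₀) R,
      ∀ ξ₂ ∈ Metric.closedBall (flow2 u (t - T) 0 x₀) R,
        κ ‖ξ₁ - ξ₂‖ ≤ cumError2 ℓ u (t - T) t ξ₁ ξ₂

/-!
Along the circular input every trajectory is a translate of the circle of radius `r₀` about `ℓ`,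
so over one period `T = 2π/ω` the trajectories from two points `ξ₁, ξ₂` within `r₀/2` of
`x(t - T)` stay at distance between `r₀/2` and `3r₀/2` from `ℓ`. The distance between two
bearings dominates the sine of the angle between them, `cross(q₁, q₂) / (‖q₁‖ ‖q₂‖)`, and along
the circle `cross(q₁, q₂)` is a trigonometric polynomial `A cos θ + B sin θ + b` with
`A² + B² = r₀² ‖ξ₁ - ξ₂‖²`. Its square averages to at least `(A² + B²)/2` over a period, which
yields the quadratic `𝒦`-function `ρ ↦ π r₀² ρ² / (ω (3r₀/2)⁴)`.
-/

open Real

@[simp] lemma vec2_apply_zero (a b : ℝ) : vec2 a b 0 = a := rfl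

@[simp] lemma vec2_apply_one (a b : ℝ) : vec2 a b 1 = b := rfl

lemma smul_vec2 (c a b : ℝ) : c • vec2 a b = vec2 (c * a) (c * b) := by
  ext i; fin_cases i <;> rfl

lemma vec2_eq_smul_add_smul (a b : ℝ) : vec2 a b = a • vec2 1 0 + b • vec2 0 1 := by
  ext i; fin_cases i <;> simp

@[fun_prop]
lemma Continuous.vec2 {f g : ℝ → ℝ} (hf : Continuous f) (hg : Continuous g) :
    Continuous fun s => vec2 (f s) (g s) := by
  simp only [vec2_eq_smul_add_smul (f _)]; fun_prop

lemma HasDerivAt.vec2 {f g : ℝ → ℝ} {f' g' s : ℝ} (hf : HasDerivAt f f' s) (hg : HasDerivAt g g' s) :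
    HasDerivAt (fun s => vec2 (f s) (g s)) (vec2 f' g') s := by
  simp only [vec2_eq_smul_add_smul (f _), vec2_eq_smul_add_smul f']
  exact (hf.smul_const _).add (hg.smul_const _)

lemma norm_vec2_cos_sin (θ : ℝ) : ‖vec2 (cos θ) (sin θ)‖ = 1 := by
  simp [EuclideanSpace.norm_eq, vec2]

noncomputable def cross2 (x y : Pt) : ℝ := x 0 * y 1 - x 1 * y 0

lemma cross2_smul_left (c : ℝ) (x y : Pt) : cross2 (c • x) y = c * cross2 x y := by
  simp only [cross2, PiLp.smul_apply, smul_eq_mul]; ring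

lemma cross2_smul_right (c : ℝ) (x y : Pt) : cross2 x (c • y) = c * cross2 x y := by
  simp only [cross2, PiLp.smul_apply, smul_eq_mul]; ring

lemma cross2_sq_add_inner_sq (x y : Pt) :
    cross2 x y ^ 2 + inner ℝ x y ^ 2 = ‖x‖ ^ 2 * ‖y‖ ^ 2 := by
  simp only [cross2, EuclideanSpace.real_norm_sq_eq, PiLp.inner_apply, Fin.sum_univ_two,
    RCLike.inner_apply, conj_trivial]
  ring

lemma cross2_sq_le_norm_sub_sq {u v : Pt} (hu : ‖u‖ = 1) (hv : ‖v‖ = 1) :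
    cross2 u v ^ 2 ≤ ‖u - v‖ ^ 2 := by
  have hlagrange := cross2_sq_add_inner_sq u v
  rw [norm_sub_sq_real, hu, hv] at *
  nlinarith [sq_nonneg (1 - inner ℝ u v)]

lemma cross2_sq_le_mul_norm_normalize_sub_sq (x y : Pt) :
    cross2 x y ^ 2 ≤ ‖x‖ ^ 2 * ‖y‖ ^ 2 * ‖‖x‖⁻¹ • x - ‖y‖⁻¹ • y‖ ^ 2 := by
  rcases eq_or_ne x 0 with rfl | hx
  · simp [cross2]
  rcases eq_or_ne y 0 with rfl | hy
  · simp [cross2]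
  have hunit := cross2_sq_le_norm_sub_sq (norm_smul_inv_norm (𝕜 := ℝ) hx)
    (norm_smul_inv_norm (𝕜 := ℝ) hy)
  simp only [cross2_smul_left, cross2_smul_right, RCLike.ofReal_real_eq_id, id] at hunit
  have hx' : ‖x‖ ≠ 0 := norm_ne_zero_iff.2 hx
  have hy' : ‖y‖ ≠ 0 := norm_ne_zero_iff.2 hy
  calc cross2 x y ^ 2 = ‖x‖ ^ 2 * ‖y‖ ^ 2 * (‖y‖⁻¹ * (‖x‖⁻¹ * cross2 x y)) ^ 2 := by
        field_simp
    _ ≤ _ := mul_le_mul_of_nonneg_left hunit (by positivity)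

lemma bearing_add_of_ne_zero (ℓ : Pt) {q : Pt} (hq : q ≠ 0) :
    bearing ℓ (ℓ + q) = -(‖q‖⁻¹ • q) := by
  rw [bearing, if_neg (by simpa using hq), show ℓ - (ℓ + q) = -q by abel, norm_neg, smul_neg]

lemma norm_bearing_add_sub_bearing_add (ℓ : Pt) {q₁ q₂ : Pt} (h₁ : q₁ ≠ 0) (h₂ : q₂ ≠ 0) :
    ‖bearing ℓ (ℓ + q₁) - bearing ℓ (ℓ + q₂)‖ = ‖‖q₁‖⁻¹ • q₁ - ‖q₂‖⁻¹ • q₂‖ := by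
  rw [bearing_add_of_ne_zero ℓ h₁, bearing_add_of_ne_zero ℓ h₂, ← norm_neg]
  congr 1; abel

lemma integral_cross2_sq_le {a b ρ : ℝ} (hab : a ≤ b) {q₁ q₂ : ℝ → Pt}
    (hq₁ : Continuous q₁) (hq₂ : Continuous q₂) (h₁ : ∀ s, q₁ s ≠ 0) (h₂ : ∀ s, q₂ s ≠ 0)
    (hρ₁ : ∀ s, ‖q₁ s‖ ≤ ρ) (hρ₂ : ∀ s, ‖q₂ s‖ ≤ ρ) :
    ∫ s in a..b, cross2 (q₁ s) (q₂ s) ^ 2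
      ≤ ρ ^ 4 * ∫ s in a..b, ‖‖q₁ s‖⁻¹ • q₁ s - ‖q₂ s‖⁻¹ • q₂ s‖ ^ 2 := by
  have hnormalize : ∀ {q : ℝ → Pt}, Continuous q → (∀ s, q s ≠ 0) →
      Continuous fun s => ‖q s‖⁻¹ • q s := fun hq h =>
    (hq.norm.inv₀ fun s => norm_ne_zero_iff.2 (h s)).smul hq
  rw [← intervalIntegral.integral_const_mul]
  refine intervalIntegral.integral_mono_on hab (Continuous.intervalIntegrable (by
    simp only [cross2]; fun_prop) _ _) (Continuous.intervalIntegrable (by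
    have := hnormalize hq₁ h₁; have := hnormalize hq₂ h₂; fun_prop) _ _) fun s _ => ?_
  calc cross2 (q₁ s) (q₂ s) ^ 2
      ≤ ‖q₁ s‖ ^ 2 * ‖q₂ s‖ ^ 2 * ‖‖q₁ s‖⁻¹ • q₁ s - ‖q₂ s‖⁻¹ • q₂ s‖ ^ 2 :=
        cross2_sq_le_mul_norm_normalize_sub_sq _ _
    _ ≤ ρ ^ 2 * ρ ^ 2 * ‖‖q₁ s‖⁻¹ • q₁ s - ‖q₂ s‖⁻¹ • q₂ s‖ ^ 2 := by
        gcongr <;> simp_all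
    _ = _ := by ring

lemma integral_sq_cos_add_sin_add_const (A B b x : ℝ) :
    ∫ θ in x..x + 2 * π, (A * cos θ + B * sin θ + b) ^ 2
      = 2 * π * ((A ^ 2 + B ^ 2) / 2 + b ^ 2) := by
  -- expand the square using `cos² θ = (1 + cos 2θ) / 2` and `sin² θ = (1 - cos 2θ) / 2`
  let F : ℝ → ℝ := fun θ => ((A ^ 2 + B ^ 2) / 2 + b ^ 2) * θ + (A ^ 2 - B ^ 2) / 4 * sin (2 * θ)
    - A * B / 2 * cos (2 * θ) + 2 * A * b * sin θ - 2 * B * b * cos θ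
  have hF : ∀ θ, HasDerivAt F ((A * cos θ + B * sin θ + b) ^ 2) θ := by
    intro θ
    have h2 : HasDerivAt (fun θ : ℝ => 2 * θ) 2 θ := by simpa using (hasDerivAt_id θ).const_mul 2
    refine (((((hasDerivAt_id θ).const_mul ((A ^ 2 + B ^ 2) / 2 + b ^ 2)).add
      (h2.sin.const_mul ((A ^ 2 - B ^ 2) / 4))).sub (h2.cos.const_mul (A * B / 2))).add
      ((hasDerivAt_sin θ).const_mul (2 * A * b))).sub
      ((hasDerivAt_cos θ).const_mul (2 * B * b)) |>.congr_deriv ?_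
    rw [cos_two_mul, sin_two_mul]
    linear_combination (-B ^ 2) * sin_sq_add_cos_sq θ
  rw [intervalIntegral.integral_eq_sub_of_hasDerivAt (fun θ _ => hF θ)
    (Continuous.intervalIntegrable (by fun_prop) _ _)]
  simp only [F, mul_add, show 2 * (2 * π) = 2 * π + 2 * π by ring, ← add_assoc, sin_add_two_pi,
    cos_add_two_pi]
  ring

lemma integral_sq_cos_add_sin_add_const_comp_mul_add {ω : ℝ} (hω : ω ≠ 0) (A B b ψ a : ℝ) :
    ∫ s in a..a + 2 * π / ω, (A * cos (ω * s + ψ) + B * sin (ω * s + ψ) + b) ^ 2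
      = 2 * π / ω * ((A ^ 2 + B ^ 2) / 2 + b ^ 2) := by
  rw [intervalIntegral.integral_comp_mul_add (fun θ => (A * cos θ + B * sin θ + b) ^ 2) hω,
    show ω * (a + 2 * π / ω) + ψ = ω * a + ψ + 2 * π by field_simp; ring,
    integral_sq_cos_add_sin_add_const, smul_eq_mul]
  ring

section CircularInput

variable (ω r ψ : ℝ)

noncomputable def circleOrbit (s : ℝ) : Pt := r • vec2 (cos (ω * s + ψ)) (sin (ω * s + ψ))

noncomputable def circleInput (s : ℝ) : Pt := (ω * r) • vec2 (-sin (ω * s + ψ)) (cos (ω * s + ψ))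

lemma hasDerivAt_circleOrbit (s : ℝ) :
    HasDerivAt (circleOrbit ω r ψ) (circleInput ω r ψ s) s := by
  have hθ : HasDerivAt (fun τ => ω * τ + ψ) ω s := by
    simpa using ((hasDerivAt_id s).const_mul ω).add_const ψ
  refine ((hθ.cos.vec2 hθ.sin).const_smul r).congr_deriv ?_
  rw [circleInput, smul_vec2, smul_vec2]
  congr 1 <;> ring

lemma continuous_circleOrbit : Continuous (circleOrbit ω r ψ) := by
  unfold circleOrbit; fun_prop

lemma continuous_circleInput : Continuous (circleInput ω r ψ) := by
  unfold circleInput; fun_prop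

lemma flow2_circleInput (s t : ℝ) (ξ : Pt) :
    flow2 (circleInput ω r ψ) s t ξ = ξ + (circleOrbit ω r ψ s - circleOrbit ω r ψ t) := by
  rw [flow2, intervalIntegral.integral_eq_sub_of_hasDerivAt
    (fun τ _ => hasDerivAt_circleOrbit ω r ψ τ) ((continuous_circleInput ω r ψ).intervalIntegrable _ _)]

lemma circleOrbit_zero : circleOrbit ω r ψ 0 = r • vec2 (cos ψ) (sin ψ) := by
  simp [circleOrbit]

variable {r} in
lemma norm_circleOrbit (hr : 0 ≤ r) (s : ℝ) : ‖circleOrbit ω r ψ s‖ = r := by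
  rw [circleOrbit, norm_smul, norm_vec2_cos_sin, mul_one, Real.norm_of_nonneg hr]

variable {r} in
lemma circleOrbit_add_ne_zero {δ : Pt} (hδ : ‖δ‖ < r) (s : ℝ) : circleOrbit ω r ψ s + δ ≠ 0 := by
  intro h
  have := norm_circleOrbit ω ψ ((norm_nonneg δ).trans hδ.le) s
  rw [eq_neg_of_add_eq_zero_left h, norm_neg] at this
  linarith

variable {r} in
lemma norm_circleOrbit_add_le (hr : 0 ≤ r) (s : ℝ) (δ : Pt) :
    ‖circleOrbit ω r ψ s + δ‖ ≤ r + ‖δ‖ :=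
  (norm_add_le _ _).trans_eq (by rw [norm_circleOrbit ω ψ hr])

variable {r} in
lemma cumError2_circleInput_eq (ℓ : Pt) (a b : ℝ) {δ₁ δ₂ : Pt} (h₁ : ‖δ₁‖ < r) (h₂ : ‖δ₂‖ < r) :
    cumError2 ℓ (circleInput ω r ψ) a b (ℓ + circleOrbit ω r ψ a + δ₁) (ℓ + circleOrbit ω r ψ a + δ₂)
      = ∫ s in a..b, ‖‖circleOrbit ω r ψ s + δ₁‖⁻¹ • (circleOrbit ω r ψ s + δ₁)
          - ‖circleOrbit ω r ψ s + δ₂‖⁻¹ • (circleOrbit ω r ψ s + δ₂)‖ ^ 2 := by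
  have hflow : ∀ δ s, flow2 (circleInput ω r ψ) s a (ℓ + circleOrbit ω r ψ a + δ)
      = ℓ + (circleOrbit ω r ψ s + δ) := by
    intro δ s; rw [flow2_circleInput]; abel
  refine intervalIntegral.integral_congr fun s _ => ?_
  simp only [hflow, norm_bearing_add_sub_bearing_add ℓ (circleOrbit_add_ne_zero ω ψ h₁ s)
    (circleOrbit_add_ne_zero ω ψ h₂ s)]

lemma cross2_circleOrbit_add_add (s : ℝ) (δ₁ δ₂ : Pt) :
    cross2 (circleOrbit ω r ψ s + δ₁) (circleOrbit ω r ψ s + δ₂)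
      = r * (δ₂ - δ₁) 1 * cos (ω * s + ψ) + -(r * (δ₂ - δ₁) 0) * sin (ω * s + ψ)
        + cross2 δ₁ (δ₂ - δ₁) := by
  simp only [cross2, circleOrbit, PiLp.add_apply, PiLp.sub_apply, PiLp.smul_apply, smul_eq_mul,
    vec2_apply_zero, vec2_apply_one]
  ring

end CircularInput

lemma isKFunction_const_mul_sq {C : ℝ} (hC : 0 < C) : IsKFunction fun ρ => C * ρ ^ 2 :=
  ⟨by fun_prop, fun _ hx _ _ hxy => mul_lt_mul_of_pos_left (pow_lt_pow_left₀ hxy hx two_ne_zero) hC,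
    by simp⟩

theorem mul_norm_sub_sq_le_cumError2_circleInput {ω r : ℝ} (hω : 0 < ω) (hr : 0 < r) (ψ : ℝ)
    (ℓ : Pt) (a : ℝ) {ξ₁ ξ₂ : Pt} (h₁ : ξ₁ ∈ closedBall (ℓ + circleOrbit ω r ψ a) (r / 2))
    (h₂ : ξ₂ ∈ closedBall (ℓ + circleOrbit ω r ψ a) (r / 2)) :
    π * r ^ 2 / (ω * (3 * r / 2) ^ 4) * ‖ξ₁ - ξ₂‖ ^ 2
      ≤ cumError2 ℓ (circleInput ω r ψ) a (a + 2 * π / ω) ξ₁ ξ₂ := by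
  obtain ⟨δ₁, rfl⟩ : ∃ δ, ξ₁ = ℓ + circleOrbit ω r ψ a + δ := ⟨_, (add_sub_cancel _ _).symm⟩
  obtain ⟨δ₂, rfl⟩ : ∃ δ, ξ₂ = ℓ + circleOrbit ω r ψ a + δ := ⟨_, (add_sub_cancel _ _).symm⟩
  rw [mem_closedBall_iff_norm, add_sub_cancel_left] at h₁ h₂
  have hlt : ∀ {δ : Pt}, ‖δ‖ ≤ r / 2 → ‖δ‖ < r := fun hδ => hδ.trans_lt (half_lt_self hr)
  have hbound : ∀ {δ : Pt}, ‖δ‖ ≤ r / 2 → ∀ s, ‖circleOrbit ω r ψ s + δ‖ ≤ 3 * r / 2 :=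
    fun hδ s => (norm_circleOrbit_add_le ω ψ hr.le s _).trans (by linarith)
  have hcross : ∫ s in a..a + 2 * π / ω,
      cross2 (circleOrbit ω r ψ s + δ₁) (circleOrbit ω r ψ s + δ₂) ^ 2
      = 2 * π / ω * ((r ^ 2 * ‖δ₂ - δ₁‖ ^ 2) / 2 + cross2 δ₁ (δ₂ - δ₁) ^ 2) := by
    simp only [cross2_circleOrbit_add_add, integral_sq_cos_add_sin_add_const_comp_mul_add hω.ne']
    rw [EuclideanSpace.real_norm_sq_eq, Fin.sum_univ_two]
    ring
  have hle := integral_cross2_sq_le (le_add_of_nonneg_right (a := a) (by positivity : 0 ≤ 2 * π / ω))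
    (q₁ := fun s => circleOrbit ω r ψ s + δ₁) (q₂ := fun s => circleOrbit ω r ψ s + δ₂)
    ((continuous_circleOrbit ω r ψ).add continuous_const)
    ((continuous_circleOrbit ω r ψ).add continuous_const)
    (circleOrbit_add_ne_zero ω ψ (hlt h₁)) (circleOrbit_add_ne_zero ω ψ (hlt h₂))
    (hbound h₁) (hbound h₂)
  rw [hcross] at hle
  rw [cumError2_circleInput_eq ω ψ ℓ _ _ (hlt h₁) (hlt h₂), add_sub_add_left_eq_sub, norm_sub_rev]
  calc π * r ^ 2 / (ω * (3 * r / 2) ^ 4) * ‖δ₂ - δ₁‖ ^ 2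
      = 2 * π / ω * ((r ^ 2 * ‖δ₂ - δ₁‖ ^ 2) / 2) / (3 * r / 2) ^ 4 := by
        field_simp
    _ ≤ 2 * π / ω * ((r ^ 2 * ‖δ₂ - δ₁‖ ^ 2) / 2 + cross2 δ₁ (δ₂ - δ₁) ^ 2) / (3 * r / 2) ^ 4 := by
        gcongr; exact le_add_of_nonneg_right (sq_nonneg _)
    _ ≤ _ := by rwa [div_le_iff₀' (by positivity)]

theorem stmt18_general (ℓ x₀ : Pt) (ω r₀ ψ₀ : ℝ) (hω : 0 < ω) (hr₀pos : 0 < r₀)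
    (hψ₀ : x₀ - ℓ = r₀ • vec2 (Real.cos ψ₀) (Real.sin ψ₀)) :
    WeaklyRegularlyPersistentAt2 ℓ
      (fun s => (ω * r₀) • vec2 (-Real.sin (ω * s + ψ₀)) (Real.cos (ω * s + ψ₀)))
      x₀ := by
  show WeaklyRegularlyPersistentAt2 ℓ (circleInput ω r₀ ψ₀) x₀
  have horbit : ∀ s, flow2 (circleInput ω r₀ ψ₀) s 0 x₀ = ℓ + circleOrbit ω r₀ ψ₀ s := by
    intro s
    rw [flow2_circleInput, circleOrbit_zero, ← hψ₀]
    abel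
  refine ⟨2 * π / ω, by positivity, r₀ / 2, by positivity, _,
    isKFunction_const_mul_sq (by positivity : 0 < π * r₀ ^ 2 / (ω * (3 * r₀ / 2) ^ 4)),
    fun t _ ξ₁ h₁ ξ₂ h₂ => ?_⟩
  rw [horbit] at h₁ h₂
  simpa using mul_norm_sub_sq_le_cumError2_circleInput hω hr₀pos ψ₀ ℓ (t - 2 * π / ω) h₁ h₂

/-- the circular input
`u_circ(s) = ω r₀ (−sin(ωs + ψ₀), cos(ωs + ψ₀))` is a weakly regularly persistent
input trajectory of the bearing-only system at `x₀`. -/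
theorem stmt18 (ℓ x₀ : Pt) (hx₀ : x₀ ≠ ℓ) (ω r₀ ψ₀ : ℝ) (hω : 0 < ω)
    (hr₀ : r₀ = ‖ℓ - x₀‖) (hr₀pos : 0 < r₀)
    (hψ₀ : x₀ - ℓ = r₀ • vec2 (Real.cos ψ₀) (Real.sin ψ₀)) :
    WeaklyRegularlyPersistentAt2 ℓ
      (fun s => (ω * r₀) • vec2 (-Real.sin (ω * s + ψ₀)) (Real.cos (ω * s + ψ₀)))
      x₀ :=
  stmt18_general ℓ x₀ ω r₀ ψ₀ hω hr₀pos hψ₀
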